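/- arXiv:0806.1820 — 4 statements merged into one kernel-verified Lean document; each statement's English description precedes it below -/
import Mathlib

section
/- Let G be a Hausdorff topological group, Γ a semigroup of bi-continuous automorphisms of G, and K a compact subgroup of G with γ(K) = K for all γ ∈ Γ. Then the Γ-action on G is distal if and only if the Γ-actions on both K and on the quotient space G/K are distal. -/
/-!
If `γ_i x K → gK` and `γ_i y K → gK`, then, lifting to `G` and using compactness of `K`,
`γ_i (x⁻¹ y)` accumulates at a point of `K`. So distality on `G ⧸ K` follows from distality
on `G` once we know that an orbit closure `closure (Γ w)` meeting `K` forces `w ∈ K`. For this,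
apply the Ellis–Numakura lemma to the compact semigroup of pairs `(f, t) ∈ Kᴷ × K` that are
limits of `(γ|_K, γ w)`, with product `(f, t) (g, s) = (f ∘ g, f s)`: an idempotent `(f, t)`
satisfies `f t = t`, so along the same net `γ_i (w t⁻¹) → t t⁻¹ = 1`, whence `w = t ∈ K`.
The converse is immediate: a non-trivial `x ∉ K` with `1 ∈ closure (Γ x)` makes the pair
`(xK, K)` proximal in `G ⧸ K`.
-/

open Topology Set Pointwise

theorem exists_fst_apply_snd_eq_of_isClosed {X : Type*} [TopologicalSpace X] [CompactSpace X]
    [T2Space X] {S : Set ((X → X) × X)} (hne : S.Nonempty) (hS : IsClosed S)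
    (hmul : ∀ p ∈ S, ∀ q ∈ S, (p.1 ∘ q.1, p.1 q.2) ∈ S) : ∃ p ∈ S, p.1 p.2 = p.2 := by
  let _ : Semigroup ((X → X) × X) :=
    { mul := fun p q => (p.1 ∘ q.1, p.1 q.2)
      mul_assoc := fun _ _ _ => rfl }
  have hcont : ∀ q : (X → X) × X, Continuous (· * q) := fun q =>
    (continuous_pi fun x => (continuous_apply (q.1 x)).comp continuous_fst).prodMk
      ((continuous_apply q.2).comp continuous_fst)
  obtain ⟨p, hp, hpp⟩ := exists_idempotent_in_compact_subsemigroup hcont S hne hS.isCompact hmul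
  exact ⟨p, hp, congrArg Prod.snd hpp⟩

section

variable {G : Type*} [Group G]

def autOrbit (Γ : Set (MulAut G)) (x : G) : Set G := {y | ∃ γ ∈ Γ, γ x = y}

/-- The orbit of `(id, w)` under `γ • (f, u) = (γ ∘ f, γ u)`, with `γ` acting on `K` by
restriction. -/
def restrictOrbit (Γ : Set (MulAut G)) (K : Subgroup G) (w : G) : Set ((K → K) × G) :=
  {p | ∃ γ ∈ Γ, (∀ k, (p.1 k : G) = γ k) ∧ p.2 = γ w}

variable [TopologicalSpace G] {K : Subgroup G}

theorem mk_one_mem_closure_of_one_mem_closure_autOrbit {Γ : Set (MulAut G)} {x : G}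
    (h : (1 : G) ∈ closure (autOrbit Γ x)) :
    (((1 : G) : G ⧸ K), ((1 : G) : G ⧸ K)) ∈ closure {p : (G ⧸ K) × (G ⧸ K) | ∃ γ ∈ Γ,
      p = ((QuotientGroup.mk (γ x) : G ⧸ K), (QuotientGroup.mk (γ 1) : G ⧸ K))} := by
  have hmaps : MapsTo (fun g : G => ((g : G ⧸ K), ((1 : G) : G ⧸ K))) (autOrbit Γ x)
      {p | ∃ γ ∈ Γ, p = ((QuotientGroup.mk (γ x) : G ⧸ K), (QuotientGroup.mk (γ 1) : G ⧸ K))} := by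
    rintro _ ⟨γ, hγ, rfl⟩
    exact ⟨γ, hγ, by simp⟩
  exact hmaps.closure (continuous_quotient_mk'.prodMk continuous_const) h

section Subsemigroup

variable {Γ : Subsemigroup (MulAut G)} {w : G}

theorem comp_mem_closure_restrictOrbit_of_mem {γ : MulAut G} (hγ : γ ∈ Γ) (hγc : Continuous γ)
    {f : K → K} (hf : ∀ k, (f k : G) = γ k) {q : (K → K) × G}
    (hq : q ∈ closure (restrictOrbit Γ K w)) :
    (f ∘ q.1, γ q.2) ∈ closure (restrictOrbit Γ K w) := by
  have hfc : Continuous f := continuous_induced_rng.2 <| by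
    simpa only [Function.comp_def, hf] using hγc.comp continuous_subtype_val
  have hmaps : MapsTo (fun p : (K → K) × G => (f ∘ p.1, γ p.2)) (restrictOrbit Γ K w)
      (restrictOrbit Γ K w) := by
    rintro p ⟨δ, hδ, hpδ, hpw⟩
    exact ⟨γ * δ, mul_mem hγ hδ, fun k => by simp [hf, hpδ], by simp [hpw]⟩
  exact hmaps.closure (by fun_prop) hq

theorem comp_mem_closure_restrictOrbit (hcont : ∀ γ ∈ Γ, Continuous γ)
    {p q : (K → K) × G} (hp : p ∈ closure (restrictOrbit Γ K w)) {s : K} (hqs : q.2 = s)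
    (hq : q ∈ closure (restrictOrbit Γ K w)) :
    (p.1 ∘ q.1, (p.1 s : G)) ∈ closure (restrictOrbit Γ K w) := by
  have hmaps : MapsTo (fun a : (K → K) × G => (a.1 ∘ q.1, (a.1 s : G))) (restrictOrbit Γ K w)
      (closure (restrictOrbit Γ K w)) := by
    rintro a ⟨γ, hγ, haγ, -⟩
    simpa only [haγ, hqs] using comp_mem_closure_restrictOrbit_of_mem hγ (hcont γ hγ) haγ hq
  simpa only [closure_closure] using hmaps.closure (by fun_prop) hp

end Subsemigroup

variable [IsTopologicalGroup G]

theorem closure_autOrbit_inv_mul_inter_nonempty {Γ : Set (MulAut G)}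
    (hK : IsCompact (K : Set G)) {x y g : G}
    (h : ((g : G ⧸ K), (g : G ⧸ K)) ∈ closure {p : (G ⧸ K) × (G ⧸ K) | ∃ γ ∈ Γ,
      p = ((QuotientGroup.mk (γ x) : G ⧸ K), (QuotientGroup.mk (γ y) : G ⧸ K))}) :
    (closure (autOrbit Γ (x⁻¹ * y)) ∩ K).Nonempty := by
  set P : Set ((G ⧸ K) × (G ⧸ K)) := {p | ∃ γ ∈ Γ,
    p = ((QuotientGroup.mk (γ x) : G ⧸ K), (QuotientGroup.mk (γ y) : G ⧸ K))}
  set π : G × G → (G ⧸ K) × (G ⧸ K) := Prod.map QuotientGroup.mk QuotientGroup.mk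
  set Q : Set (G × G) := {q | ∃ γ ∈ Γ, q = (γ x, γ y)}
  have hπ : (g, g) ∈ closure (π ⁻¹' P) :=
    (QuotientGroup.isOpenMap_coe.prodMap
      QuotientGroup.isOpenMap_coe).preimage_closure_subset_closure_preimage h
  have hsat : π ⁻¹' P ⊆ closure Q * (K : Set G) ×ˢ (K : Set G) := by
    rintro ⟨a, b⟩ ⟨γ, hγ, hab⟩
    simp only [π, Prod.map, Prod.mk.injEq] at hab
    exact ⟨(γ x, γ y), subset_closure ⟨γ, hγ, rfl⟩, ((γ x)⁻¹ * a, (γ y)⁻¹ * b),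
      ⟨QuotientGroup.eq.1 hab.1.symm, QuotientGroup.eq.1 hab.2.symm⟩, by simp⟩
  obtain ⟨⟨a, b⟩, hab, ⟨k, k'⟩, ⟨hk, hk'⟩, hg⟩ :=
    (isClosed_closure.mul_right_of_isCompact (hK.prod hK)).closure_subset_iff.2 hsat hπ
  simp only [Prod.mk_mul_mk, Prod.mk.injEq] at hg
  have hmaps : MapsTo (fun q : G × G => q.1⁻¹ * q.2) Q (autOrbit Γ (x⁻¹ * y)) := by
    rintro _ ⟨γ, hγ, rfl⟩
    exact ⟨γ, hγ, by simp⟩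
  refine ⟨a⁻¹ * b, hmaps.closure (by fun_prop) hab, ?_⟩
  have hba : a⁻¹ * b = k * k'⁻¹ := by
    rw [eq_mul_inv_of_mul_eq hg.1, eq_mul_inv_of_mul_eq hg.2]
    group
  rw [hba]
  exact mul_mem hk (inv_mem hk')

variable [T2Space G] {Γ : Subsemigroup (MulAut G)} {w : G}

theorem exists_one_mem_closure_autOrbit_mul_inv (hcont : ∀ γ ∈ Γ, Continuous γ)
    (hK : IsCompact (K : Set G)) (hKinv : ∀ γ ∈ Γ, MapsTo γ K K)
    (hw : (closure (autOrbit Γ w) ∩ K).Nonempty) :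
    ∃ t ∈ K, (1 : G) ∈ closure (autOrbit Γ (w * t⁻¹)) := by
  have : CompactSpace K := isCompact_iff_compactSpace.mp hK
  set S : Set ((K → K) × K) := {p | (p.1, (p.2 : G)) ∈ closure (restrictOrbit Γ K w)}
  have hS : IsClosed S := isClosed_closure.preimage (by fun_prop)
  have hne : S.Nonempty := by
    obtain ⟨z, hz, hzK⟩ := hw
    have horbit : autOrbit Γ w ⊆ Prod.snd '' restrictOrbit Γ K w := by
      rintro _ ⟨γ, hγ, rfl⟩
      exact ⟨((hKinv γ hγ).restrict, γ w), ⟨γ, hγ, fun _ => rfl, rfl⟩, rfl⟩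
    obtain ⟨⟨f, u⟩, hfu, rfl⟩ :=
      isClosedMap_snd_of_compactSpace.closure_image_subset _ (closure_mono horbit hz)
    exact ⟨(f, ⟨u, hzK⟩), hfu⟩
  obtain ⟨⟨f, t⟩, hft, hfix : f t = t⟩ := exists_fst_apply_snd_eq_of_isClosed hne hS
    fun p hp q hq => comp_mem_closure_restrictOrbit hcont hp rfl hq
  have hmaps : MapsTo (fun a : (K → K) × G => a.2 * (a.1 t : G)⁻¹) (restrictOrbit Γ K w)
      (autOrbit Γ (w * t⁻¹)) := by
    rintro a ⟨γ, hγ, haγ, haw⟩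
    exact ⟨γ, hγ, by simp [haγ, haw]⟩
  refine ⟨t, t.2, ?_⟩
  simpa [hfix] using hmaps.closure (by fun_prop) hft

theorem mem_of_closure_autOrbit_inter_nonempty
    (hdist : ∀ x : G, x ≠ 1 → (1 : G) ∉ closure (autOrbit Γ x))
    (hcont : ∀ γ ∈ Γ, Continuous γ) (hK : IsCompact (K : Set G))
    (hKinv : ∀ γ ∈ Γ, MapsTo γ K K) (hw : (closure (autOrbit Γ w) ∩ K).Nonempty) : w ∈ K := by
  obtain ⟨t, htK, ht⟩ := exists_one_mem_closure_autOrbit_mul_inv hcont hK hKinv hw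
  by_contra hwK
  exact hdist _ (fun h => hwK (by rwa [mul_inv_eq_one.1 h])) ht

end

/-- Let `G` be a Hausdorff topological group, `Γ` a semigroup of
bi-continuous automorphisms of `G`, and `K` a compact subgroup with `γ(K) = K` for all
`γ ∈ Γ`.  Then the `Γ`-action on `G` is distal iff the `Γ`-actions on `K` and on the
coset space `G ⧸ K` are distal. -/
theorem distal_iff_distal_on_compact_and_quotient
    {G : Type*} [Group G] [TopologicalSpace G] [IsTopologicalGroup G] [T2Space G]
    (Γ : Subsemigroup (MulAut G))
    (hcont : ∀ γ ∈ Γ, Continuous (γ : MulAut G) ∧ Continuous (γ : MulAut G).symm)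
    (K : Subgroup G) (hK : IsCompact (K : Set G))
    (hinv : ∀ γ ∈ Γ, ((γ : MulAut G) : G → G) '' (K : Set G) = (K : Set G)) :
    (∀ x : G, x ≠ 1 → (1 : G) ∉ closure {y : G | ∃ γ ∈ Γ, (γ : MulAut G) x = y}) ↔
      ((∀ x ∈ K, x ≠ 1 → (1 : G) ∉ closure {y : G | ∃ γ ∈ Γ, (γ : MulAut G) x = y}) ∧
        (∀ x y : G, (QuotientGroup.mk x : G ⧸ K) ≠ QuotientGroup.mk y →
          ∀ c : G ⧸ K,
            (c, c) ∉ closure {p : (G ⧸ K) × (G ⧸ K) | ∃ γ ∈ Γ,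
              p = ((QuotientGroup.mk ((γ : MulAut G) x) : G ⧸ K),
                   (QuotientGroup.mk ((γ : MulAut G) y) : G ⧸ K))})) := by
  constructor
  · intro hG
    refine ⟨fun x _ => hG x, fun x y hxy c hc => ?_⟩
    obtain ⟨g, rfl⟩ := QuotientGroup.mk_surjective c
    exact hxy <| QuotientGroup.eq.2 <| mem_of_closure_autOrbit_inter_nonempty hG
      (fun γ hγ => (hcont γ hγ).1) hK (fun γ hγ => mapsTo_iff_image_subset.2 (hinv γ hγ).le)
      (closure_autOrbit_inv_mul_inter_nonempty hK hc)
  · rintro ⟨hKdist, hQdist⟩ x hx h1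
    by_cases hxK : x ∈ K
    · exact hKdist x hxK hx h1
    · refine hQdist x 1 (fun h => hxK ?_) _ (mk_one_mem_closure_of_one_mem_closure_autOrbit h1)
      simpa using QuotientGroup.eq.1 h
end

section
/- Let G be a locally compact group and α a bi-continuous automorphism of G such that the action of {αⁿ : n ∈ ℕ} on G is distal. Then for any compact subgroup K of G with α(K) = K, the set {x ∈ G : αⁿ(x)K → K in G/K along some subsequence} equals K. -/
/-!
Suppose `αⁿ x K → K` along a filter on `ℕ`, and refine it to an ultrafilter `𝒰`. Since
`G → G ⧸ K` is proper for compact `K`, `αⁿ x → g` along `𝒰` for some `g ∈ K`; by compactness of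
`K → K`, also `αⁿ|_K → β` pointwise. Distality makes every element of the enveloping semigroup
of `α|_K` injective, hence, by Ellis' idempotent argument, surjective. So `β d = g` for some
`d ∈ K`, whence `αⁿ (x d⁻¹) → g g⁻¹ = 1` and distality forces `x = d ∈ K`.
-/

open Topology Filter Set Function

section EnvelopingSemigroup

variable {X : Type*} [TopologicalSpace X]

def envelopingSemigroup (f : X → X) : Set (X → X) :=
  closure (range fun n : ℕ => f^[n])

variable {f : X → X}

theorem id_mem_envelopingSemigroup (f : X → X) : id ∈ envelopingSemigroup f :=
  subset_closure ⟨0, rfl⟩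

theorem iterate_comp_mem_envelopingSemigroup (hf : Continuous f) (n : ℕ) {p : X → X}
    (hp : p ∈ envelopingSemigroup f) : f^[n] ∘ p ∈ envelopingSemigroup f := by
  refine map_mem_closure (continuous_pi fun x => (hf.iterate n).comp (continuous_apply x)) hp ?_
  rintro _ ⟨m, rfl⟩
  exact ⟨n + m, iterate_add f n m⟩

theorem comp_mem_envelopingSemigroup (hf : Continuous f) {p q : X → X}
    (hp : p ∈ envelopingSemigroup f) (hq : q ∈ envelopingSemigroup f) :
    p ∘ q ∈ envelopingSemigroup f := by
  refine closure_minimal ?_ isClosed_closure <|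
    map_mem_closure (f := (· ∘ q)) (continuous_pi fun x => continuous_apply (q x)) hp
      (mapsTo_image _ _)
  rintro _ ⟨_, ⟨n, rfl⟩, rfl⟩
  exact iterate_comp_mem_envelopingSemigroup hf n hq

/-- Ellis: for `b ∈ E`, the compact semigroup `E ∘ b` contains an idempotent `u ∘ b`, which,
being injective, is the identity; then `b (u y) = y` by injectivity of `u`. -/
theorem surjective_of_mem_envelopingSemigroup [CompactSpace X] [T2Space X] (hf : Continuous f)
    (hinj : ∀ w ∈ envelopingSemigroup f, Injective w) {b : X → X}
    (hb : b ∈ envelopingSemigroup f) : Surjective b := by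
  let _ : TopologicalSpace (Function.End X) := inferInstanceAs (TopologicalSpace (X → X))
  have : T2Space (Function.End X) := inferInstanceAs (T2Space (X → X))
  set E := envelopingSemigroup f
  have hE : IsCompact E := isClosed_closure.isCompact
  obtain ⟨_, ⟨u, hu, rfl⟩, hidem⟩ := exists_idempotent_in_compact_subsemigroup
    (M := Function.End X) (fun r => continuous_pi fun x => continuous_apply (r x))
    ((· ∘ b) '' E) ⟨_, mem_image_of_mem _ (id_mem_envelopingSemigroup f)⟩
    (hE.image (continuous_pi fun x => continuous_apply (b x))) (by
      rintro _ ⟨p, hp, rfl⟩ _ ⟨q, hq, rfl⟩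
      exact ⟨p ∘ b ∘ q, comp_mem_envelopingSemigroup hf hp
        (comp_mem_envelopingSemigroup hf hb hq), rfl⟩)
  have hub_inj : Injective (u ∘ b) := hinj _ (comp_mem_envelopingSemigroup hf hu hb)
  have hub : ∀ x, u (b x) = x := fun x => hub_inj (congrFun hidem x)
  exact fun y => ⟨u y, hinj u hu (hub (u y))⟩

end EnvelopingSemigroup

namespace QuotientGroup

variable {G : Type*} [Group G] [TopologicalSpace G] [IsTopologicalGroup G]

theorem isProperMap_mk {K : Subgroup G} (hK : IsCompact (K : Set G)) :
    IsProperMap ((↑) : G → G ⧸ K) := by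
  refine isProperMap_iff_isClosedMap_and_compact_fibers.2
    ⟨continuous_coinduced_rng, isClosedMap_coe hK, ?_⟩
  intro y
  obtain ⟨g, rfl⟩ := mk_surjective y
  rw [← image_singleton, preimage_image_mk_eq_mul]
  exact isCompact_singleton.mul hK

end QuotientGroup

namespace MulAut

variable {G : Type*} [Group G]

theorem coe_pow (α : MulAut G) (n : ℕ) : ⇑(α ^ n) = (⇑α)^[n] := by
  induction n with
  | zero => rfl
  | succ n ih => rw [pow_succ, iterate_succ, ← ih]; rfl

variable [TopologicalSpace G]

def IsDistal (α : MulAut G) : Prop :=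
  ∀ x : G, x ≠ 1 → (1 : G) ∉ closure {y : G | ∃ n : ℕ, y = (α ^ n) x}

variable {α : MulAut G}

theorem IsDistal.eq_one_of_tendsto (hα : IsDistal α) {l : Filter ℕ} [l.NeBot] {x : G}
    (h : Tendsto (fun n => (α ^ n) x) l (𝓝 1)) : x = 1 := by
  by_contra hx
  exact hα x hx (mem_closure_of_tendsto h (Eventually.of_forall fun n => ⟨n, rfl⟩))

variable [IsTopologicalGroup G]

/-- In a topological group `1 ∈ closure {x}` iff `x ∈ closure {1}`, and `x` lies on its own orbit. -/
theorem IsDistal.t2Space (hα : IsDistal α) : T2Space G := by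
  rw [IsTopologicalGroup.t2Space_iff_one_closed, ← closure_subset_iff_isClosed]
  intro x hx
  by_contra hx1
  have hx_orbit : x ∈ {y : G | ∃ n : ℕ, y = (α ^ n) x} := ⟨0, rfl⟩
  refine hα x hx1 (closure_mono (singleton_subset_iff.2 hx_orbit) ?_)
  exact specializes_iff_mem_closure.1 (specializes_iff_mem_closure.2 hx).symm

/-- If `w k = w k'`, the orbit of `k⁻¹ * k'` accumulates at `(w k)⁻¹ * w k' = 1`. -/
theorem IsDistal.injective_of_mem_envelopingSemigroup (hα : IsDistal α) {S : Set G}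
    (hS : MapsTo α S S) {w : S → S} (hw : w ∈ envelopingSemigroup (hS.restrict α S S)) :
    Injective w := by
  intro k k' hkk'
  let c : (S → S) → G := fun h => ((h k : G))⁻¹ * h k'
  have hc : Continuous c := by fun_prop
  have hc_orbit : MapsTo c (range fun n => (hS.restrict α S S)^[n])
      {y : G | ∃ n : ℕ, y = (α ^ n) ((k : G)⁻¹ * k')} := by
    rintro _ ⟨n, rfl⟩
    exact ⟨n, by simp [c, hS.coe_iterate_restrict, coe_pow]⟩
  have h1 := map_mem_closure hc hw hc_orbit
  simp only [c, hkk', inv_mul_cancel] at h1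
  by_contra hne
  exact hα _ (by simpa [inv_mul_eq_one, Subtype.ext_iff, eq_comm] using hne) h1

theorem IsDistal.mem_of_tendsto_mk (hα : IsDistal α) (hc : Continuous α) {K : Subgroup G}
    (hK : IsCompact (K : Set G)) (hKα : MapsTo α K K) {l : Filter ℕ} [l.NeBot] {x : G}
    (hx : Tendsto (fun n => ((α ^ n) x : G ⧸ K)) l (𝓝 ((1 : G) : G ⧸ K))) : x ∈ K := by
  have := hα.t2Space
  have := isCompact_iff_compactSpace.mp hK
  set f := hKα.restrict α K K
  have hf : Continuous f := (hc.comp continuous_subtype_val).subtype_mk _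
  let 𝒰 := Ultrafilter.of l
  obtain ⟨β, -, hβ⟩ := isCompact_univ.ultrafilter_le_nhds (𝒰.map fun n => f^[n]) (by simp)
  replace hβ : Tendsto (fun n => f^[n]) 𝒰 (𝓝 β) := hβ
  have hβE : β ∈ envelopingSemigroup f :=
    mem_closure_of_tendsto hβ (Eventually.of_forall fun n => mem_range_self n)
  obtain ⟨g, hgK, hg⟩ := (QuotientGroup.isProperMap_mk hK).ultrafilter_le_nhds_of_tendsto
    (y := ((1 : G) : G ⧸ K)) (𝒰 := 𝒰.map fun n => (α ^ n) x)
    (tendsto_map'_iff.2 (hx.mono_left (Ultrafilter.of_le l)))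
  replace hgK : g ∈ K := by simpa using QuotientGroup.eq.1 hgK
  replace hg : Tendsto (fun n => (α ^ n) x) 𝒰 (𝓝 g) := hg
  obtain ⟨d, hd⟩ := surjective_of_mem_envelopingSemigroup hf
    (fun w hw => hα.injective_of_mem_envelopingSemigroup hKα hw) hβE ⟨g, hgK⟩
  have hdg : Tendsto (fun n => (α ^ n) (d : G)) 𝒰 (𝓝 g) := by
    have := ((continuous_subtype_val.comp (continuous_apply d)).tendsto β).comp hβ
    simpa [comp_def, hd, f, hKα.coe_iterate_restrict, coe_pow] using this
  have h1 : Tendsto (fun n => (α ^ n) (x * (d : G)⁻¹)) 𝒰 (𝓝 1) := by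
    simpa using hg.mul hdg.inv
  exact mul_inv_eq_one.mp (hα.eq_one_of_tendsto h1) ▸ d.2

end MulAut

theorem subseq_contraction_mod_compact_eq_self_general
    {G : Type*} [Group G] [TopologicalSpace G] [IsTopologicalGroup G]
    (α : MulAut G) (hc : Continuous α)
    (hdistal : ∀ x : G, x ≠ 1 → (1 : G) ∉ closure {y : G | ∃ n : ℕ, y = (α ^ n) x})
    (K : Subgroup G) (hK : IsCompact (K : Set G))
    (hinv : (α : G → G) '' (K : Set G) = (K : Set G)) :
    {x : G | ∃ φ : ℕ → ℕ, StrictMono φ ∧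
        Tendsto (fun n => (QuotientGroup.mk ((α ^ φ n) x) : G ⧸ K)) atTop
          (nhds (QuotientGroup.mk (1 : G)))} = (K : Set G) := by
  have hKα : MapsTo α K K := mapsTo_iff_image_subset.2 hinv.subset
  ext x
  constructor
  · rintro ⟨φ, -, hφ⟩
    exact MulAut.IsDistal.mem_of_tendsto_mk hdistal hc hK hKα (l := map φ atTop)
      (tendsto_map'_iff.mpr hφ)
  · intro hx
    refine ⟨id, strictMono_id, tendsto_const_nhds.congr fun n => ?_⟩
    refine QuotientGroup.eq.2 ?_
    simpa [MulAut.coe_pow] using hKα.iterate n hx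

/-- If `α` is a bi-continuous automorphism of a locally compact group `G`
whose forward orbits give a distal action, then for any compact subgroup `K` with
`α(K) = K`, the set of `x ∈ G` such that `αⁿ(x)K → K` in `G ⧸ K` along some subsequence
is exactly `K`. -/
theorem subseq_contraction_mod_compact_eq_self
    {G : Type*} [Group G] [TopologicalSpace G] [IsTopologicalGroup G] [LocallyCompactSpace G]
    (α : MulAut G) (hc : Continuous α) (hc' : Continuous α.symm)
    (hdistal : ∀ x : G, x ≠ 1 → (1 : G) ∉ closure {y : G | ∃ n : ℕ, y = (α ^ n) x})
    (K : Subgroup G) (hK : IsCompact (K : Set G))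
    (hinv : (α : G → G) '' (K : Set G) = (K : Set G)) :
    {x : G | ∃ φ : ℕ → ℕ, StrictMono φ ∧
        Tendsto (fun n => (QuotientGroup.mk ((α ^ φ n) x) : G ⧸ K)) atTop
          (nhds (QuotientGroup.mk (1 : G)))} = (K : Set G) :=
  subseq_contraction_mod_compact_eq_self_general α hc hdistal K hK hinv
end

section
/- Let G be a locally compact group whose conjugation action is point-wise distal. If x ∈ G and K is a compact subgroup of G with xKx⁻¹ ⊆ K, then xKx⁻¹ = K. -/
open Topology

/-- The conjugation action of `G` on itself is point-wise distal. -/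
def PointwiseDistal (G : Type*) [Group G] [TopologicalSpace G] : Prop :=
  ∀ g : G, ∀ y : G, y ≠ 1 →
    (1 : G) ∉ closure {z : G | ∃ n : ℕ, z = g ^ n * y * (g ^ n)⁻¹}

/-!
A compact set `K` mapped into itself by `φ k = x k x⁻¹` carries the semigroup
`E = positiveEnvelope φ`, the closure of the positive powers of `φ` in `K → K`. Being a compact
semigroup with continuous right multiplication, `E` contains an idempotent `u` (Ellis–Numakura).
Every element of `E` is injective by distality: if `u y = u z`, then along a net `φⁿ → u` the
conjugates `xⁿ (y⁻¹ z) x⁻ⁿ` of `y⁻¹ z` tend to `1`. An injective idempotent is the identity,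
while every element of `E` takes values in `φ(K)`, which is closed because distality for `g = 1`
makes `G` Hausdorff; hence `φ(K) = K`.
-/

open Set Function

theorem PointwiseDistal.t2Space {G : Type*} [Group G] [TopologicalSpace G] [IsTopologicalGroup G]
    (hG : PointwiseDistal G) : T2Space G := by
  refine IsTopologicalGroup.t2Space_of_one_sep fun y hy => ?_
  simpa [mem_closure_iff_nhds] using hG 1 y hy

theorem iterate_conj {G : Type*} [Group G] (x y : G) (n : ℕ) :
    (fun k => x * k * x⁻¹)^[n] y = x ^ n * y * (x ^ n)⁻¹ := by
  induction n with
  | zero => simp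
  | succ n ih => rw [iterate_succ_apply', ih, pow_succ']; group

section Enveloping

variable {X : Type*} [TopologicalSpace X] {φ : X → X}

def positiveEnvelope (φ : X → X) : Set (X → X) :=
  closure (range fun n : ℕ => φ^[n + 1])

theorem comp_mem_positiveEnvelope (hφ : Continuous φ) {f g : X → X}
    (hf : f ∈ positiveEnvelope φ) (hg : g ∈ positiveEnvelope φ) : f ∘ g ∈ positiveEnvelope φ := by
  have iterate_comp_mem (m : ℕ) : φ^[m + 1] ∘ g ∈ positiveEnvelope φ := by
    refine MapsTo.closure_left (f := (φ^[m + 1] ∘ ·)) ?_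
      (continuous_pi fun k => (hφ.iterate (m + 1)).comp (continuous_apply k)) isClosed_closure hg
    rintro _ ⟨n, rfl⟩
    refine subset_closure ⟨m + n + 1, ?_⟩
    simp only [← iterate_add, show m + 1 + (n + 1) = m + n + 1 + 1 by omega]
  refine MapsTo.closure_left (f := (· ∘ g)) ?_ (continuous_pi fun k => continuous_apply (g k))
    isClosed_closure hf
  rintro _ ⟨m, rfl⟩
  exact iterate_comp_mem m

theorem exists_idempotent_mem_positiveEnvelope [CompactSpace X] [T2Space X]
    (hφ : Continuous φ) : ∃ u ∈ positiveEnvelope φ, u ∘ u = u :=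
  letI : Semigroup (X → X) := { mul := (· ∘ ·), mul_assoc := fun _ _ _ => rfl }
  exists_idempotent_in_compact_subsemigroup (fun g => continuous_pi fun k => continuous_apply (g k))
    _ ⟨φ, subset_closure ⟨0, rfl⟩⟩ isClosed_closure.isCompact
    fun _ hf _ hg => comp_mem_positiveEnvelope hφ hf hg

theorem apply_mem_range_of_mem_positiveEnvelope [CompactSpace X] [T2Space X]
    (hφ : Continuous φ) {u : X → X} (hu : u ∈ positiveEnvelope φ) (k : X) :
    u k ∈ range φ := by
  refine MapsTo.closure_left ?_ (continuous_apply k) (isCompact_range hφ).isClosed hu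
  rintro _ ⟨n, rfl⟩
  exact ⟨φ^[n] k, (iterate_succ_apply' φ n k).symm⟩

end Enveloping

theorem PointwiseDistal.injective_of_mem_positiveEnvelope {G : Type*} [Group G]
    [TopologicalSpace G] [IsTopologicalGroup G] (hG : PointwiseDistal G) {x : G} {K : Set G}
    (hK : MapsTo (fun k => x * k * x⁻¹) K K) {u : K → K}
    (hu : u ∈ positiveEnvelope hK.restrict) : Injective u := by
  intro y z hyz
  by_contra hne
  refine hG x ((y : G)⁻¹ * z) (fun h => hne (Subtype.ext (inv_mul_eq_one.1 h))) ?_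
  have hF : Continuous fun f : K → K => (f y : G)⁻¹ * f z := by fun_prop
  have h := map_mem_closure hF hu (t := {w | ∃ n : ℕ, w = x ^ n * ((y : G)⁻¹ * z) * (x ^ n)⁻¹})
    (by
      rintro _ ⟨n, rfl⟩
      refine ⟨n + 1, ?_⟩
      simp only [MapsTo.coe_iterate_restrict, iterate_conj]
      group)
  rwa [hyz, inv_mul_cancel] at h

theorem conj_compact_subgroup_eq_of_pointwiseDistal_general
    {G : Type*} [Group G] [TopologicalSpace G] [IsTopologicalGroup G]
    (hG : PointwiseDistal G) (x : G) (K : Subgroup G) (hK : IsCompact (K : Set G))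
    (hsub : (fun k => x * k * x⁻¹) '' (K : Set G) ⊆ (K : Set G)) :
    (fun k => x * k * x⁻¹) '' (K : Set G) = (K : Set G) := by
  have := hG.t2Space
  have := isCompact_iff_compactSpace.mp hK
  have hmaps : MapsTo (fun k => x * k * x⁻¹) (K : Set G) K := mapsTo_iff_image_subset.2 hsub
  have hφ : Continuous hmaps.restrict := by fun_prop
  obtain ⟨u, hu, huu⟩ := exists_idempotent_mem_positiveEnvelope hφ
  have hu_id (k : K) : u k = k := hG.injective_of_mem_positiveEnvelope hmaps hu (congrFun huu k)
  refine hsub.antisymm fun k hk => ?_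
  obtain ⟨k', hk'⟩ := hu_id ⟨k, hk⟩ ▸ apply_mem_range_of_mem_positiveEnvelope hφ hu ⟨k, hk⟩
  exact ⟨k', k'.2, congrArg Subtype.val hk'⟩

/-- In a locally compact point-wise distal group, if `x K x⁻¹ ⊆ K` for a
compact subgroup `K`, then `x K x⁻¹ = K`. -/
theorem conj_compact_subgroup_eq_of_pointwiseDistal
    {G : Type*} [Group G] [TopologicalSpace G] [IsTopologicalGroup G] [LocallyCompactSpace G]
    (hG : PointwiseDistal G) (x : G) (K : Subgroup G) (hK : IsCompact (K : Set G))
    (hsub : (fun k => x * k * x⁻¹) '' (K : Set G) ⊆ (K : Set G)) :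
    (fun k => x * k * x⁻¹) '' (K : Set G) = (K : Set G) :=
  conj_compact_subgroup_eq_of_pointwiseDistal_general hG x K hK hsub
end

section
/- Let K = 𝕋² and α(w, z) = (wz, z). Let L = {(1, z) : z ∈ 𝕋} and let μ be a Borel probability measure on K invariant under translation by L. Then there is a subsequence (kₙ) such that the pushforwards α^{kₙ}(μ) converge weakly to the normalized Haar measure on K. Consequently the action of ⟨α⟩ on the space P(K) of probability measures is not distal. -/
open Topology MeasureTheory Filter

/-- The automorphism `α(w, z) = (wz, z)` of the 2-torus `𝕋²`. -/
noncomputable def torusAut : MulAut (Circle × Circle) where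
  toFun p := (p.1 * p.2, p.2)
  invFun p := (p.1 * p.2⁻¹, p.2)
  left_inv p := by
    simp [Prod.ext_iff, mul_assoc]
  right_inv p := by
    simp [Prod.ext_iff, mul_assoc]
  map_mul' p q := by
    simp [Prod.ext_iff, mul_mul_mul_comm]


noncomputable instance : MeasurableSpace Circle := borel Circle
instance : BorelSpace Circle := ⟨rfl⟩

/-- Weak* convergence of a sequence of measures. -/
def WeakTendsto {G : Type*} [TopologicalSpace G] [MeasurableSpace G]
    (μs : ℕ → Measure G) (ν : Measure G) : Prop :=
  ∀ f : BoundedContinuousFunction G ℝ,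
    Tendsto (fun n => ∫ x, f x ∂(μs n)) atTop (nhds (∫ x, f x ∂ν))

/-!
Under `α^k` the character `χ_{m,l}(w, z) = w^m z^l` pulls back to `χ_{m, km+l}`. Invariance of `μ`
under `L` kills the integral of every character whose second index is nonzero, so once `k > |l|`
the integral of `χ_{m,l}` against `α^k μ` vanishes unless `(m, l) = 0`, exactly as for Haar
measure. The characters span a dense subspace of `C(𝕋², ℂ)` by Stone–Weierstrass, and integration
against probability measures is uniformly `1`-Lipschitz on it, so `α^k μ → Haar` weakly along the
whole sequence. Haar measure of `𝕋²` and Haar measure of the vertical circle `{1} × 𝕋` are two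
distinct `L`-invariant measures; their orbits converge to the same limit, so the action is not
distal.
-/

open Measure

section Translation

variable {G 𝕜 : Type*} [Group G] [MeasurableSpace G] [MeasurableMul G] [RCLike 𝕜]

theorem integral_eq_zero_of_map_mul_left_eq_self {ν : Measure G} {c : G}
    (hν : ν.map (c * ·) = ν) {f : G → 𝕜} {d : 𝕜} (hf : ∀ x, f (c * x) = d * f x)
    (hd : d ≠ 1) : ∫ x, f x ∂ν = 0 := by
  have h : ∫ x, f x ∂ν = d * ∫ x, f x ∂ν := by
    conv_lhs => rw [← hν, ← MeasurableEquiv.coe_mulLeft, integral_map_equiv]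
    simp only [MeasurableEquiv.coe_mulLeft, hf, integral_const_mul]
  have h' : (1 - d) * ∫ x, f x ∂ν = 0 := by rw [sub_mul, one_mul, ← h, sub_self]
  exact (mul_eq_zero.1 h').resolve_left (sub_ne_zero.2 hd.symm)

theorem MonoidHom.measurable_inr {M N : Type*} [Monoid M] [Monoid N] [MeasurableSpace M]
    [MeasurableSpace N] : Measurable (MonoidHom.inr M N) :=
  measurable_prodMk_left

theorem map_map_mul_left_eq_self {H : Type*} [Group H] [MeasurableSpace H] [MeasurableMul H]
    {ν : Measure H} {h : H} (hν : ν.map (h * ·) = ν) {φ : H →* G} (hφ : Measurable φ) :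
    (ν.map φ).map (φ h * ·) = ν.map φ := by
  have hcomm : (φ h * ·) ∘ φ = φ ∘ (h * ·) := funext fun x => (map_mul φ h x).symm
  rw [Measure.map_map (measurable_const_mul _) hφ, hcomm,
    ← Measure.map_map hφ (measurable_const_mul h), hν]

end Translation

instance isProbabilityMeasure_haarMeasure_top {G : Type*} [Group G] [TopologicalSpace G]
    [IsTopologicalGroup G] [CompactSpace G] [MeasurableSpace G] [BorelSpace G] :
    IsProbabilityMeasure (Measure.haarMeasure (⊤ : TopologicalSpace.PositiveCompacts G)) :=
  ⟨by simpa using Measure.haarMeasure_self (K₀ := (⊤ : TopologicalSpace.PositiveCompacts G))⟩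

section WeakConvergence

variable {X : Type*} [TopologicalSpace X] [MeasurableSpace X]

theorem weakTendsto_of_forall_tendsto_integral {μs : ℕ → Measure X} {ν : Measure X}
    (h : ∀ g : C(X, ℂ), Tendsto (fun n => ∫ x, g x ∂μs n) atTop (𝓝 (∫ x, g x ∂ν))) :
    WeakTendsto μs ν := fun f => by
  have hf := h ⟨fun x => (f x : ℂ), by fun_prop⟩
  simp only [ContinuousMap.coe_mk, integral_complex_ofReal] at hf
  simpa [Function.comp_def] using (Complex.continuous_re.tendsto _).comp hf

variable [CompactSpace X] [OpensMeasurableSpace X] {𝕜 : Type*} [RCLike 𝕜]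

theorem ContinuousMap.integrable_of_compactSpace (g : C(X, 𝕜)) (ν : Measure X)
    [IsFiniteMeasure ν] : Integrable g ν :=
  (ContinuousMap.equivBoundedOfCompact X 𝕜 g).integrable ν

theorem lipschitzWith_integral (ν : Measure X) [IsProbabilityMeasure ν] :
    LipschitzWith 1 fun g : C(X, 𝕜) => ∫ x, g x ∂ν := by
  refine LipschitzWith.of_dist_le_mul fun g h => ?_
  rw [dist_eq_norm, dist_eq_norm, ← integral_sub (g.integrable_of_compactSpace ν)
    (h.integrable_of_compactSpace ν), NNReal.coe_one, one_mul]
  simpa using norm_integral_le_of_norm_le_const (μ := ν)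
    (Eventually.of_forall fun x => (g - h).norm_coe_le_norm x)

theorem tendsto_integral_of_span_topologicalClosure_eq_top {ι : Type*} {l : Filter ι}
    {μs : ι → Measure X} [∀ i, IsProbabilityMeasure (μs i)] {ν : Measure X}
    [IsProbabilityMeasure ν] {S : Set C(X, 𝕜)}
    (hS : (Submodule.span 𝕜 S).topologicalClosure = ⊤)
    (h : ∀ g ∈ S, Tendsto (fun i => ∫ x, g x ∂μs i) l (𝓝 (∫ x, g x ∂ν))) (g : C(X, 𝕜)) :
    Tendsto (fun i => ∫ x, g x ∂μs i) l (𝓝 (∫ x, g x ∂ν)) := by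
  let T : Submodule 𝕜 C(X, 𝕜) :=
    { carrier := {g | Tendsto (fun i => ∫ x, g x ∂μs i) l (𝓝 (∫ x, g x ∂ν))}
      zero_mem' := by simpa using tendsto_const_nhds
      add_mem' := fun {g h} hg hh => by
        simpa [integral_add (g.integrable_of_compactSpace _) (h.integrable_of_compactSpace _)]
          using hg.add hh
      smul_mem' := fun c g hg => by simpa [integral_const_mul] using hg.const_smul c }
  have hT : IsClosed (T : Set C(X, 𝕜)) :=
    (LipschitzWith.uniformEquicontinuous _ 1 fun i => lipschitzWith_integral (μs i))
      |>.equicontinuous.isClosed_setOfPred_tendsto (lipschitzWith_integral ν).continuous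
  have hle := Submodule.topologicalClosure_minimal _ (Submodule.span_le.2 h : _ ≤ T) hT
  rw [hS] at hle
  exact hle Submodule.mem_top

end WeakConvergence

theorem span_topologicalClosure_eq_top_of_separatesPoints {X 𝕜 : Type*} [TopologicalSpace X]
    [CompactSpace X] [RCLike 𝕜] (M : Submonoid C(X, 𝕜)) (hstar : ∀ f ∈ M, star f ∈ M)
    (hsep : ∀ x y, x ≠ y → ∃ f ∈ M, f x ≠ f y) :
    (Submodule.span 𝕜 (M : Set C(X, 𝕜))).topologicalClosure = ⊤ := by
  have hM : (StarAlgebra.adjoin 𝕜 (M : Set C(X, 𝕜))).toSubalgebra.toSubmodule =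
      Submodule.span 𝕜 M := by
    have hsub : star (M : Set C(X, 𝕜)) ⊆ M := fun f (hf : star f ∈ M) => star_star f ▸ hstar _ hf
    rw [StarAlgebra.adjoin_toSubalgebra, Set.union_eq_left.2 hsub,
      Algebra.adjoin_eq_span, Submonoid.closure_eq]
  rw [← hM]
  refine congr_arg (fun A : StarSubalgebra 𝕜 C(X, 𝕜) => A.toSubalgebra.toSubmodule)
    (ContinuousMap.starSubalgebra_topologicalClosure_eq_top_of_separatesPoints _ ?_)
  intro x y hxy
  obtain ⟨f, hfM, hf⟩ := hsep x y hxy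
  exact ⟨f, ⟨f, StarAlgebra.subset_adjoin 𝕜 _ hfM, rfl⟩, hf⟩

local notation "𝕋²" => Circle × Circle

theorem Circle.exists_zpow_ne_one {j : ℤ} (hj : j ≠ 0) : ∃ z : Circle, z ^ j ≠ 1 :=
  ⟨Circle.exp (Real.pi / j), by
    rw [← Circle.exp_zsmul, zsmul_eq_mul, mul_div_cancel₀ _ (Int.cast_ne_zero.2 hj)]
    exact Circle.exp_pi_ne_one⟩

noncomputable def torusFourier (n : ℤ × ℤ) : C(𝕋², ℂ) where
  toFun p := ↑(p.1 ^ n.1 * p.2 ^ n.2)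
  continuous_toFun := continuous_subtype_val.comp (by fun_prop)

theorem torusFourier_apply (n : ℤ × ℤ) (p : 𝕋²) :
    torusFourier n p = ↑(p.1 ^ n.1 * p.2 ^ n.2) := rfl

theorem torusFourier_zero : torusFourier 0 = 1 := by
  ext p
  simp [torusFourier_apply]

theorem torusFourier_add (m n : ℤ × ℤ) :
    torusFourier (m + n) = torusFourier m * torusFourier n := by
  ext p
  simp only [torusFourier_apply, Prod.fst_add, Prod.snd_add, zpow_add, ContinuousMap.mul_apply,
    ← Circle.coe_mul]
  ac_rfl

theorem star_torusFourier (n : ℤ × ℤ) : star (torusFourier n) = torusFourier (-n) := by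
  ext p
  simp [torusFourier_apply, ← Circle.coe_inv_eq_conj]

theorem torusFourier_mul_apply (n : ℤ × ℤ) (c p : 𝕋²) :
    torusFourier n (c * p) = torusFourier n c * torusFourier n p := by
  simp only [torusFourier_apply, Prod.fst_mul, Prod.snd_mul, mul_zpow, ← Circle.coe_mul]
  ac_rfl

theorem exists_torusFourier_ne_one {n : ℤ × ℤ} (hn : n ≠ 0) : ∃ c : 𝕋², torusFourier n c ≠ 1 := by
  by_cases h₁ : n.1 = 0
  · obtain ⟨z, hz⟩ := Circle.exists_zpow_ne_one fun h₂ => hn (Prod.ext h₁ h₂)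
    exact ⟨(1, z), by simpa only [torusFourier_apply, h₁, zpow_zero, one_zpow, one_mul, ne_eq,
      Circle.coe_eq_one] using hz⟩
  · obtain ⟨z, hz⟩ := Circle.exists_zpow_ne_one h₁
    exact ⟨(z, 1), by simpa only [torusFourier_apply, one_zpow, mul_one, ne_eq,
      Circle.coe_eq_one] using hz⟩

def torusFourierSubmonoid : Submonoid C(𝕋², ℂ) where
  carrier := Set.range torusFourier
  one_mem' := ⟨0, torusFourier_zero⟩
  mul_mem' := by
    rintro _ _ ⟨m, rfl⟩ ⟨n, rfl⟩
    exact ⟨m + n, torusFourier_add m n⟩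

theorem span_torusFourier_topologicalClosure_eq_top :
    (Submodule.span ℂ (Set.range torusFourier)).topologicalClosure = ⊤ := by
  refine span_topologicalClosure_eq_top_of_separatesPoints torusFourierSubmonoid ?_ ?_
  · rintro _ ⟨n, rfl⟩
    exact ⟨-n, (star_torusFourier n).symm⟩
  · intro p q hpq
    by_cases h : p.1 = q.1
    · refine ⟨torusFourier (0, 1), ⟨_, rfl⟩, ?_⟩
      simpa only [torusFourier_apply, zpow_zero, zpow_one, one_mul, ne_eq, Circle.coe_inj]
        using fun h' => hpq (Prod.ext h h')
    · refine ⟨torusFourier (1, 0), ⟨_, rfl⟩, ?_⟩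
      simpa only [torusFourier_apply, zpow_zero, zpow_one, mul_one, ne_eq, Circle.coe_inj]
        using h

theorem integral_torusFourier_eq_zero_of_ne_zero {ν : Measure 𝕋²}
    (hν : ∀ c : 𝕋², ν.map (c * ·) = ν) {n : ℤ × ℤ} (hn : n ≠ 0) :
    ∫ p, torusFourier n p ∂ν = 0 := by
  obtain ⟨c, hc⟩ := exists_torusFourier_ne_one hn
  exact integral_eq_zero_of_map_mul_left_eq_self (hν c) (torusFourier_mul_apply n c) hc

theorem integral_torusFourier_eq_zero_of_snd_ne_zero {ν : Measure 𝕋²}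
    (hν : ∀ z : Circle, ν.map (fun p => ((1, z) : 𝕋²) * p) = ν) {n : ℤ × ℤ} (hn : n.2 ≠ 0) :
    ∫ p, torusFourier n p ∂ν = 0 := by
  obtain ⟨z, hz⟩ := Circle.exists_zpow_ne_one hn
  exact integral_eq_zero_of_map_mul_left_eq_self (hν z) (torusFourier_mul_apply n (1, z))
    (by simpa only [torusFourier_apply, one_zpow, one_mul, ne_eq, Circle.coe_eq_one] using hz)

theorem torusAut_zpow_apply (k : ℤ) (p : 𝕋²) : (torusAut ^ k) p = (p.1 * p.2 ^ k, p.2) := by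
  induction k using Int.induction_on generalizing p with
  | zero => simp
  | succ k ih =>
    rw [zpow_add_one, MulAut.mul_apply, ih]
    simp [torusAut, zpow_add_one, mul_assoc, mul_comm]
  | pred k ih =>
    rw [zpow_sub_one, MulAut.mul_apply, ih]
    simp [torusAut, zpow_sub_one, mul_assoc, mul_comm]

theorem continuous_torusAut_zpow (k : ℤ) : Continuous (torusAut ^ k) := by
  rw [funext (torusAut_zpow_apply k)]
  fun_prop

instance isProbabilityMeasure_map_torusAut_zpow (μ : Measure 𝕋²) [IsProbabilityMeasure μ]
    (k : ℤ) : IsProbabilityMeasure (μ.map (torusAut ^ k)) :=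
  isProbabilityMeasure_map (continuous_torusAut_zpow k).aemeasurable

theorem torusFourier_torusAut_zpow_apply (n : ℤ × ℤ) (k : ℤ) (p : 𝕋²) :
    torusFourier n ((torusAut ^ k) p) = torusFourier (n.1, k * n.1 + n.2) p := by
  simp only [torusFourier_apply, torusAut_zpow_apply, mul_zpow, ← zpow_mul, zpow_add, mul_assoc]

theorem integral_torusFourier_map_torusAut_zpow (μ : Measure 𝕋²) (n : ℤ × ℤ) (k : ℤ) :
    ∫ p, torusFourier n p ∂(μ.map (torusAut ^ k)) =
      ∫ p, torusFourier (n.1, k * n.1 + n.2) p ∂μ := by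
  rw [integral_map (continuous_torusAut_zpow k).aemeasurable
    (torusFourier n).continuous.aestronglyMeasurable]
  simp only [torusFourier_torusAut_zpow_apply]

theorem tendsto_integral_torusFourier_map_torusAut_pow {μ : Measure 𝕋²} [IsProbabilityMeasure μ]
    (hμ : ∀ z : Circle, μ.map (fun p => ((1, z) : 𝕋²) * p) = μ) (n : ℤ × ℤ) :
    Tendsto (fun k : ℕ => ∫ p, torusFourier n p ∂(μ.map (torusAut ^ (k : ℤ)))) atTop
      (𝓝 (∫ p, torusFourier n p ∂(haarMeasure ⊤ : Measure 𝕋²))) := by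
  rcases eq_or_ne n 0 with rfl | hn
  · simp only [torusFourier_zero, ContinuousMap.one_apply, integral_const, probReal_univ, one_smul]
    exact tendsto_const_nhds
  rw [integral_torusFourier_eq_zero_of_ne_zero (fun c => map_mul_left_eq_self _ c) hn]
  refine tendsto_const_nhds.congr' ?_
  filter_upwards [eventually_gt_atTop n.2.natAbs] with k hk
  rw [integral_torusFourier_map_torusAut_zpow, integral_torusFourier_eq_zero_of_snd_ne_zero hμ]
  -- once `k > |n.2|`, the term `k * n.1` can only cancel `n.2` when `n.1 = 0`, and then `n.2 ≠ 0`
  intro h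
  rcases eq_or_ne n.1 0 with h₁ | h₁
  · exact hn (Prod.ext h₁ (by simpa [h₁] using h))
  · have habs := congrArg Int.natAbs (eq_neg_of_add_eq_zero_left h)
    rw [Int.natAbs_neg, Int.natAbs_mul, Int.natAbs_natCast] at habs
    have hkn : k ≤ n.2.natAbs := habs ▸ Nat.le_mul_of_pos_right k (Int.natAbs_pos.2 h₁)
    omega

theorem weakTendsto_map_torusAut_pow_haar {μ : Measure 𝕋²} [IsProbabilityMeasure μ]
    (hμ : ∀ z : Circle, μ.map (fun p => ((1, z) : 𝕋²) * p) = μ) :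
    WeakTendsto (fun k : ℕ => μ.map (torusAut ^ (k : ℤ))) (haarMeasure ⊤) := by
  refine weakTendsto_of_forall_tendsto_integral <|
    tendsto_integral_of_span_topologicalClosure_eq_top
      span_torusFourier_topologicalClosure_eq_top ?_
  rintro _ ⟨n, rfl⟩
  exact tendsto_integral_torusFourier_map_torusAut_pow hμ n

noncomputable def verticalHaar : Measure 𝕋² :=
  (haarMeasure ⊤ : Measure Circle).map (MonoidHom.inr Circle Circle)

instance : IsProbabilityMeasure verticalHaar :=
  isProbabilityMeasure_map MonoidHom.measurable_inr.aemeasurable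

theorem map_mul_left_verticalHaar (z : Circle) :
    verticalHaar.map (fun p => ((1, z) : 𝕋²) * p) = verticalHaar :=
  map_map_mul_left_eq_self (φ := MonoidHom.inr Circle Circle) (map_mul_left_eq_self _ z)
    MonoidHom.measurable_inr

theorem verticalHaar_ne_haarMeasure : verticalHaar ≠ haarMeasure ⊤ := by
  intro h
  have hint := congrArg (fun ν => ∫ p, torusFourier (1, 0) p ∂ν) h
  simp only [verticalHaar, integral_map MonoidHom.measurable_inr.aemeasurable
    (torusFourier (1, 0)).continuous.aestronglyMeasurable,
    integral_torusFourier_eq_zero_of_ne_zero (fun c => map_mul_left_eq_self _ c)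
      (by simp : ((1, 0) : ℤ × ℤ) ≠ 0)] at hint
  simp [torusFourier_apply] at hint

/-- If `μ` is a probability measure on `𝕋²` invariant under translation
by the subgroup `L = {(1, z)}`, then some subsequence of the pushforwards `α^{kₙ}(μ)`
converges weakly to the normalized Haar measure of `𝕋²`; consequently the action of
`⟨α⟩` on the space of probability measures of `𝕋²` is not distal. -/
theorem torusAut_pushforward_tendsto_haar
    (μ : Measure (Circle × Circle)) (hμ : IsProbabilityMeasure μ)
    (hinv : ∀ z : Circle, μ.map (fun p => ((1, z) : Circle × Circle) * p) = μ) :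
    (∃ k : ℕ → ℕ, StrictMono k ∧
      WeakTendsto (fun n => μ.map (torusAut ^ (k n : ℤ)))
        (Measure.haarMeasure (⊤ : TopologicalSpace.PositiveCompacts (Circle × Circle)))) ∧
    ¬ (∀ μ' ν' : Measure (Circle × Circle),
        IsProbabilityMeasure μ' → IsProbabilityMeasure ν' → μ' ≠ ν' →
        ¬ ∃ (k : ℕ → ℤ) (ρ : Measure (Circle × Circle)),
            WeakTendsto (fun n => μ'.map (torusAut ^ k n)) ρ ∧
            WeakTendsto (fun n => ν'.map (torusAut ^ k n)) ρ) := by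
  refine ⟨⟨id, strictMono_id, weakTendsto_map_torusAut_pow_haar hinv⟩, fun h => ?_⟩
  exact h verticalHaar (haarMeasure ⊤) inferInstance inferInstance verticalHaar_ne_haarMeasure
    ⟨fun k => k, haarMeasure ⊤, weakTendsto_map_torusAut_pow_haar map_mul_left_verticalHaar,
      weakTendsto_map_torusAut_pow_haar fun z => map_mul_left_eq_self _ _⟩
end
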